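/- Suppose F is a Kripke frame with an initial node w₀ (every node of F is accessible from w₀) and N is a Kripke model with an initial world u₀ (every world of N is accessible from u₀). If for every Kripke model M based on F there is a model labeling of (M,w₀) for (N,u₀), then every propositional modal formula valid in the underlying frame of N is true at w₀ in every Kripke model based on F. -/
import Mathlib


namespace GrzPaper

/-- Propositional modal formulas, built from variables, falsum, implication and box. -/
inductive Formula : Type
  | var : ℕ → Formula
  | fls : Formula
  | impl : Formula → Formula → Formula
  | box : Formula → Formula
deriving DecidableEq

namespace Formula

def neg (φ : Formula) : Formula := impl φ fls
def tru : Formula := neg fls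
def disj (φ ψ : Formula) : Formula := impl (neg φ) ψ
def conj (φ ψ : Formula) : Formula := neg (impl φ (neg ψ))
def dia (φ : Formula) : Formula := neg (box (neg φ))

/-- Uniform substitution. -/
def subst (σ : ℕ → Formula) : Formula → Formula
  | var n => σ n
  | fls => fls
  | impl a b => impl (subst σ a) (subst σ b)
  | box a => box (subst σ a)

/-- Propositional (Boolean) evaluation, treating variables and boxed formulas as atoms. -/
def evalProp (v : Formula → Bool) : Formula → Bool
  | var n => v (var n)
  | fls => false
  | impl a b => !(evalProp v a) || evalProp v b
  | box a => v (box a)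

/-- A propositional tautology: true under every Boolean valuation of the atoms
(variables and boxed subformulas). -/
def Tautology (φ : Formula) : Prop := ∀ v, evalProp v φ = true

end Formula

open Formula

/-- A normal modal logic: contains all propositional tautologies and all instances of K,
closed under modus ponens, necessitation and uniform substitution. -/
structure IsNormalLogic (L : Set Formula) : Prop where
  taut : ∀ φ, Tautology φ → φ ∈ L
  axK : ∀ φ ψ, impl (box (impl φ ψ)) (impl (box φ) (box ψ)) ∈ L
  mp : ∀ φ ψ, impl φ ψ ∈ L → φ ∈ L → ψ ∈ L
  nec : ∀ φ, φ ∈ L → box φ ∈ L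
  subst : ∀ φ σ, φ ∈ L → φ.subst σ ∈ L

/-- The normal modal logic generated by a set of axioms: the smallest normal modal
logic containing them. -/
def Generated (Ax : Set Formula) : Set Formula :=
  ⋂₀ {L | IsNormalLogic L ∧ Ax ⊆ L}

def pv : Formula := var 0
def qv : Formula := var 1

def axT : Formula := impl (box pv) pv
def axFour : Formula := impl (box pv) (box (box pv))
def axGrz : Formula := impl (box (impl (box (impl pv (box pv))) pv)) pv
def axPoint2 : Formula := impl (dia (box pv)) (box (dia pv))
def axPoint3 : Formula := disj (box (impl (box pv) qv)) (box (impl (box qv) pv))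

/-- penultimate(φ) : φ ∧ ◇¬φ ∧ □(¬φ → □¬φ). -/
def penultimate (φ : Formula) : Formula :=
  conj φ (conj (dia (neg φ)) (box (impl (neg φ) (box (neg φ)))))

/-- contingent(φ) : ◇φ ∧ ◇¬φ. -/
def contingent (φ : Formula) : Formula := conj (dia φ) (dia (neg φ))

/-- The axiom Grz* : contingent(p) → ◇(penultimate(p) ∨ penultimate(¬p)). -/
def axGrzStar : Formula :=
  impl (contingent pv) (dia (disj (penultimate pv) (penultimate (neg pv))))

def Grz : Set Formula := Generated {axGrz}
def GrzStarLogic : Set Formula := Generated {axGrzStar}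
def S4GrzStar : Set Formula := Generated {axT, axFour, axGrzStar}
def Grz2 : Set Formula := Generated {axGrz, axPoint2}
def Grz3 : Set Formula := Generated {axGrz, axPoint3}
def KLogic : Set Formula := Generated ∅

/-- A Kripke model: an accessibility relation together with a valuation. -/
structure KripkeModel (W : Type) where
  rel : W → W → Prop
  val : ℕ → W → Prop

/-- Satisfaction of a modal formula at a world of a Kripke model. -/
def Satisfies {W : Type} (M : KripkeModel W) : W → Formula → Prop
  | w, .var n => M.val n w
  | _, .fls => False
  | w, .impl a b => Satisfies M w a → Satisfies M w b
  | w, .box a => ∀ v, M.rel w v → Satisfies M v a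

/-- Validity of a formula on a Kripke frame. -/
def ValidOnFrame (W : Type) (R : W → W → Prop) (φ : Formula) : Prop :=
  ∀ (val : ℕ → W → Prop) (w : W), Satisfies ⟨R, val⟩ w φ

/-- A model labeling of (M,w₀) for (N,u₀): a substitution σ such that every formula is
true at (M,w₀) iff its σ-instance is true at (N,u₀). -/
def ModelLabeling {W U : Type} (M : KripkeModel W) (w0 : W) (N : KripkeModel U) (u0 : U)
    (σ : ℕ → Formula) : Prop :=
  ∀ φ : Formula, Satisfies M w0 φ ↔ Satisfies N u0 (φ.subst σ)

/-- A frame labeling of the frame (W,R) with initial node w₀ for the pointed model (N,u₀). -/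
def FrameLabeling {W U : Type} (R : W → W → Prop) (w0 : W) (N : KripkeModel U) (u0 : U)
    (Φ : W → Formula) : Prop :=
  Satisfies N u0 (Φ w0) ∧
  (∀ u, N.rel u0 u → ∀ w, Satisfies N u (Φ w) →
    ∀ w', (Satisfies N u (dia (Φ w')) ↔ R w w')) ∧
  (∀ u, N.rel u0 u → ∃! w, Satisfies N u (Φ w))

def bigOr : List Formula → Formula
  | [] => fls
  | φ :: l => disj φ (bigOr l)

def bigAnd : List Formula → Formula
  | [] => tru
  | φ :: l => conj φ (bigAnd l)

open Classical in
/-- The disjunction ⋁ {Φ w : P w}. -/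
noncomputable def labelFormula {W : Type} [Fintype W] (Φ : W → Formula) (P : W → Prop) :
    Formula :=
  bigOr ((Finset.univ.filter P).toList.map Φ)

/-- Θ_A : the formula asserting that the button pattern is exactly A. -/
noncomputable def Theta {n : ℕ} (b : Fin n → Formula) (A : Finset (Fin n)) : Formula :=
  bigAnd ((Finset.univ : Finset (Fin n)).toList.map
    (fun i => if i ∈ A then box (b i) else neg (box (b i))))

/-- b₀,…,b_{n−1} are independent buttons at u₀: none is pushed (necessary) at u₀, and
necessarily, whenever the button pattern is exactly A, every larger pattern is possible. -/
def IndependentButtons {U : Type} (N : KripkeModel U) (u0 : U) {n : ℕ}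
    (b : Fin n → Formula) : Prop :=
  (∀ i, ¬ Satisfies N u0 (box (b i))) ∧
  ∀ A : Finset (Fin n), ∀ u, N.rel u0 u → Satisfies N u (Theta b A) →
    ∀ A' : Finset (Fin n), A ⊆ A' → Satisfies N u (dia (Theta b A'))

/-- r₀,…,r_{n−1} form a ratchet of length n at u₀. -/
def Ratchet {U : Type} (N : KripkeModel U) (u0 : U) {n : ℕ} (r : Fin n → Formula) : Prop :=
  (∀ i : Fin n, (i.val = 0 → Satisfies N u0 (box (r i))) ∧
      (0 < i.val → ¬ Satisfies N u0 (box (r i)))) ∧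
  (∀ u, N.rel u0 u → ∀ i j : Fin n, i < j →
      Satisfies N u (box (r j)) → Satisfies N u (box (r i))) ∧
  (∀ u, N.rel u0 u → ∀ i : Fin n, 0 < i.val →
      (∀ j : Fin n, Satisfies N u (box (r j)) ↔ j < i) →
        ∃ v, N.rel u v ∧ ∀ j : Fin n, Satisfies N v (box (r j)) ↔ j ≤ i)

/-- A (finite) tree order: a partial order with a least element in which the set of
predecessors of every element is linearly ordered. -/
def IsTreeOrder {W : Type} (R : W → W → Prop) : Prop :=
  IsPartialOrder W R ∧ (∃ r, ∀ x, R r x) ∧ ∀ x a b, R a x → R b x → R a b ∨ R b a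

/-- A baled tree order: a partial order with a greatest element t whose removal
leaves a tree. -/
def IsBaledTreeOrder {W : Type} (R : W → W → Prop) : Prop :=
  IsPartialOrder W R ∧ ∃ t : W, (∀ x, R x t) ∧
    (∃ r, r ≠ t ∧ ∀ x, x ≠ t → R r x) ∧
    (∀ x a b, x ≠ t → R a x → R b x → R a b ∨ R b a)

/-- Height of a node: the number of its strict predecessors. -/
noncomputable def heightOf {W : Type} (R : W → W → Prop) (x : W) : ℕ :=
  Nat.card {y : W // R y x ∧ y ≠ x}

/-- y is an immediate successor of x. -/
def ImmSucc {W : Type} (R : W → W → Prop) (x y : W) : Prop :=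
  R x y ∧ x ≠ y ∧ ∀ z, R x z → R z y → z = x ∨ z = y

def IsMaximal {W : Type} (R : W → W → Prop) (x : W) : Prop := ∀ z, R x z → z = x

/-- A regular finite tree: all maximal elements have the same height, and any two
elements of the same height have the same number of immediate successors. -/
def IsRegularTree {W : Type} (R : W → W → Prop) : Prop :=
  IsTreeOrder R ∧
  (∀ x y, IsMaximal R x → IsMaximal R y → heightOf R x = heightOf R y) ∧
  (∀ x y, heightOf R x = heightOf R y →
    Nat.card {z : W // ImmSucc R x z} = Nat.card {z : W // ImmSucc R y z})


lemma subst_satisfies {U : Type} (N : KripkeModel U) (σ : ℕ → Formula) :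
    ∀ (φ : Formula) (u : U), Satisfies N u (φ.subst σ) ↔
      Satisfies ⟨N.rel, fun n v => Satisfies N v (σ n)⟩ u φ
  | .var n, u => Iff.rfl
  | .fls, u => Iff.rfl
  | .impl a b, u => by
      simp only [Formula.subst, Satisfies, subst_satisfies N σ a u, subst_satisfies N σ b u]
  | .box a, u => by
      simp only [Formula.subst, Satisfies]
      exact forall_congr' fun v => imp_congr Iff.rfl (subst_satisfies N σ a v)

/-- If every model based on F admits a model labeling for (N,u₀), then every
formula valid in the underlying frame of N is true at w₀ in every model based on F. -/
theorem statement8 {W U : Type} (R : W → W → Prop) (w0 : W) (hw0 : ∀ x, R w0 x)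
    (N : KripkeModel U) (u0 : U) (hu0 : ∀ u, N.rel u0 u)
    (h : ∀ val : ℕ → W → Prop, ∃ σ, ModelLabeling ⟨R, val⟩ w0 N u0 σ) :
    ∀ φ : Formula, ValidOnFrame U N.rel φ →
      ∀ val : ℕ → W → Prop, Satisfies ⟨R, val⟩ w0 φ := by
  intro φ hφ val
  obtain ⟨σ, hσ⟩ := h val
  rw [hσ, subst_satisfies]
  exact hφ _ u0

end GrzPaper
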